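/- arXiv:2509.08334 — 2 statements merged into one kernel-verified Lean document; each statement's English description precedes it below -/
import Mathlib

section
/- For all δ, γ, κ > 0, the quantity sup_{t>0} ∫_0^∞ |s^{γ-1} − (s−t)^{γ-1}·1_{{s>t}}| · s^{−γ} · e^{−δ(t/s)^κ} ds is finite. -/
open MeasureTheory Set ENNReal

private noncomputable def FF (δ γ κ t s : ℝ) : ℝ≥0∞ :=
  ENNReal.ofReal
    (|s ^ (γ - 1) - (if t < s then (s - t) ^ (γ - 1) else 0)| *
      s ^ (-γ) * Real.exp (-δ * (t / s) ^ κ))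

private lemma meas_FF (δ γ κ t : ℝ) : Measurable (FF δ γ κ t) := by
  apply ENNReal.measurable_ofReal.comp
  apply Measurable.mul
  apply Measurable.mul
  · apply Measurable.abs
    apply Measurable.sub
    · fun_prop
    · exact Measurable.ite (measurableSet_Ioi (a := t)) (by fun_prop) measurable_const
  · fun_prop
  · fun_prop

/-- Subadditivity of rpow with exponent in `[0,1]`, difference form. -/
private lemma aux_rpow_sub_le {a b p : ℝ} (hb : 0 ≤ b) (hba : b ≤ a)
    (hp0 : 0 ≤ p) (hp1 : p ≤ 1) : a ^ p - b ^ p ≤ (a - b) ^ p := by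
  have hab : (0:ℝ) ≤ a - b := by linarith
  have key := NNReal.rpow_add_le_add_rpow ((a - b).toNNReal) (b.toNNReal) hp0 hp1
  have hc := NNReal.coe_le_coe.2 key
  push_cast at hc
  rw [Real.coe_toNNReal _ hab, Real.coe_toNNReal _ hb] at hc
  have h' : a - b + b = a := by ring
  rw [h'] at hc
  linarith

/-- Pointwise rescaling identity. -/
private lemma FF_scale {δ γ κ t u : ℝ} (ht : 0 < t) (hu : 0 < u) :
    FF δ γ κ t (t * u) = ENNReal.ofReal t⁻¹ * FF δ γ κ 1 u := by
  unfold FF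
  rw [← ENNReal.ofReal_mul (inv_nonneg.2 ht.le)]
  congr 1
  have hite : (if t < t * u then (t * u - t) ^ (γ - 1) else 0)
      = t ^ (γ - 1) * (if 1 < u then (u - 1) ^ (γ - 1) else 0) := by
    by_cases h : 1 < u
    · rw [if_pos h, if_pos (by nlinarith : t < t * u),
        show t * u - t = t * (u - 1) by ring,
        Real.mul_rpow ht.le (by linarith)]
    · rw [if_neg h, if_neg (by push_neg at h ⊢; nlinarith), mul_zero]
  rw [hite, show t / (t * u) = 1 / u by field_simp,
    show (t * u) ^ (γ - 1) = t ^ (γ - 1) * u ^ (γ - 1) from Real.mul_rpow ht.le hu.le,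
    show (t * u) ^ (-γ) = t ^ (-γ) * u ^ (-γ) from Real.mul_rpow ht.le hu.le]
  have habs : |t ^ (γ - 1) * u ^ (γ - 1) -
      t ^ (γ - 1) * (if 1 < u then (u - 1) ^ (γ - 1) else 0)|
      = t ^ (γ - 1) * |u ^ (γ - 1) - (if 1 < u then (u - 1) ^ (γ - 1) else 0)| := by
    rw [← mul_sub, abs_mul, abs_of_pos (Real.rpow_pos_of_pos ht _)]
  rw [habs]
  have ht1 : t ^ (γ - 1) * t ^ (-γ) = t⁻¹ := by
    rw [← Real.rpow_add ht, show γ - 1 + -γ = -1 by ring, Real.rpow_neg_one]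
  calc t ^ (γ - 1) * |u ^ (γ - 1) - (if 1 < u then (u - 1) ^ (γ - 1) else 0)| *
        (t ^ (-γ) * u ^ (-γ)) * Real.exp (-δ * (1 / u) ^ κ)
      = (t ^ (γ - 1) * t ^ (-γ)) *
        (|u ^ (γ - 1) - (if 1 < u then (u - 1) ^ (γ - 1) else 0)| *
          u ^ (-γ) * Real.exp (-δ * (1 / u) ^ κ)) := by ring
    _ = t⁻¹ * (|u ^ (γ - 1) - (if 1 < u then (u - 1) ^ (γ - 1) else 0)| *
          u ^ (-γ) * Real.exp (-δ * (1 / u) ^ κ)) := by rw [ht1]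

/-- The change of variables `s = t u`. -/
private lemma FF_integral_scale (δ γ κ : ℝ) {t : ℝ} (ht : 0 < t) :
    (∫⁻ s in Ioi (0:ℝ), FF δ γ κ t s) = ∫⁻ u in Ioi (0:ℝ), FF δ γ κ 1 u := by
  have ht' : t ≠ 0 := ht.ne'
  have hmap : Measure.map (fun u : ℝ => t * u) volume = ENNReal.ofReal t⁻¹ • volume := by
    rw [Real.map_volume_mul_left ht', abs_of_pos (inv_pos.2 ht)]
  have hind : Measurable ((Ioi (0:ℝ)).indicator (FF δ γ κ t)) :=
    (meas_FF δ γ κ t).indicator measurableSet_Ioi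
  have h1 : ∀ u : ℝ, (Ioi (0:ℝ)).indicator (FF δ γ κ t) (t * u)
      = ENNReal.ofReal t⁻¹ * (Ioi (0:ℝ)).indicator (FF δ γ κ 1) u := by
    intro u
    by_cases hu : u ∈ Ioi (0:ℝ)
    · have htu : t * u ∈ Ioi (0:ℝ) := mul_pos ht hu
      rw [indicator_of_mem htu, indicator_of_mem hu]
      exact FF_scale ht hu
    · have hu' : ¬ (0:ℝ) < u := hu
      have htu : t * u ∉ Ioi (0:ℝ) := by
        simp only [mem_Ioi] at *
        intro h; push_neg at hu'; nlinarith
      rw [indicator_of_notMem htu, indicator_of_notMem hu, mul_zero]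
  have hmb := lintegral_map (μ := volume) hind (measurable_const_mul t)
  rw [hmap, lintegral_smul_measure] at hmb
  -- hmb : ofReal t⁻¹ * ∫⁻ a, ind a = ∫⁻ a, ind (t * a)
  calc (∫⁻ s in Ioi (0:ℝ), FF δ γ κ t s)
      = ∫⁻ s, (Ioi (0:ℝ)).indicator (FF δ γ κ t) s :=
        (lintegral_indicator measurableSet_Ioi _).symm
    _ = ENNReal.ofReal t * ∫⁻ u, (Ioi (0:ℝ)).indicator (FF δ γ κ t) (t * u) := by
        rw [← hmb, smul_eq_mul, ← mul_assoc, ← ENNReal.ofReal_mul ht.le, mul_inv_cancel₀ ht',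
          ENNReal.ofReal_one, one_mul]
    _ = ENNReal.ofReal t * ∫⁻ u, ENNReal.ofReal t⁻¹ *
          (Ioi (0:ℝ)).indicator (FF δ γ κ 1) u := by simp_rw [h1]
    _ = ENNReal.ofReal t * (ENNReal.ofReal t⁻¹ *
          ∫⁻ u, (Ioi (0:ℝ)).indicator (FF δ γ κ 1) u) := by
        rw [lintegral_const_mul' _ _ ENNReal.ofReal_ne_top]
    _ = ∫⁻ u, (Ioi (0:ℝ)).indicator (FF δ γ κ 1) u := by
        rw [← mul_assoc, ← ENNReal.ofReal_mul ht.le, mul_inv_cancel₀ ht',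
          ENNReal.ofReal_one, one_mul]
    _ = ∫⁻ u in Ioi (0:ℝ), FF δ γ κ 1 u := lintegral_indicator measurableSet_Ioi _

/-- Bound on `(0,1]`. -/
private lemma piece_one {δ κ : ℝ} (hδ : 0 < δ) (hκ : 0 < κ) :
    ∃ Cδ : ℝ, ∀ u : ℝ, 0 < u → u ≤ 1 →
      u ^ (-1 : ℝ) * Real.exp (-δ * (1 / u) ^ κ) ≤ Cδ := by
  set n : ℕ := ⌈1 / κ⌉₊ with hn
  have hn1 : 1 ≤ n := Nat.one_le_iff_ne_zero.2 (by
    intro h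
    have : (1:ℝ)/κ ≤ 0 := by
      by_contra hc; push_neg at hc
      exact absurd h (Nat.ceil_pos.2 hc).ne'
    have : (0:ℝ) < 1/κ := by positivity
    linarith)
  have hκn : 1 ≤ κ * n := by
    have h2 : (1:ℝ)/κ ≤ n := Nat.le_ceil _
    calc (1:ℝ) = κ * (1/κ) := by field_simp
      _ ≤ κ * n := by nlinarith
  refine ⟨(n:ℝ)^n / δ^n, fun u hu hu1 => ?_⟩
  set x : ℝ := δ * (1 / u) ^ κ with hxdef
  have h1u : (0:ℝ) < 1 / u := by positivity
  have hx0 : 0 < x := by positivity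
  -- x^n ≤ n^n * exp x
  have hxn : x ^ n ≤ (n:ℝ)^n * Real.exp x := by
    have h1 : x / n ≤ Real.exp (x / n) := by
      have := Real.add_one_le_exp (x / n - 1)
      have h2 : Real.exp (x / n - 1) ≤ Real.exp (x / n) :=
        Real.exp_le_exp.2 (by linarith)
      linarith [Real.add_one_le_exp (x / n)]
    have hnn : (0:ℝ) < n := by exact_mod_cast hn1
    have h2 : x ≤ (n:ℝ) * Real.exp (x / n) := by
      rw [div_le_iff₀ hnn] at h1; linarith [h1]
    calc x ^ n ≤ ((n:ℝ) * Real.exp (x / n)) ^ n :=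
          pow_le_pow_left₀ hx0.le h2 n
      _ = (n:ℝ)^n * (Real.exp (x / n)) ^ n := mul_pow _ _ _
      _ = (n:ℝ)^n * Real.exp x := by
          rw [← Real.exp_nat_mul, mul_div_cancel₀ _ hnn.ne']
  -- exp (-x) ≤ n^n / x^n
  have hexp : Real.exp (-x) ≤ (n:ℝ)^n / x^n := by
    rw [Real.exp_neg]
    have hpos : (0:ℝ) < x^n / (n:ℝ)^n := by positivity
    have h3 : x^n / (n:ℝ)^n ≤ Real.exp x := by
      rw [div_le_iff₀ (by positivity : (0:ℝ) < (n:ℝ)^n)]; linarith [hxn]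
    calc (Real.exp x)⁻¹ ≤ (x^n / (n:ℝ)^n)⁻¹ := by
          apply inv_anti₀ hpos h3
      _ = (n:ℝ)^n / x^n := by rw [inv_div]
  -- x^n ≥ δ^n * u⁻¹
  have hxlow : δ^n * u⁻¹ ≤ x^n := by
    have e1 : x ^ n = δ^n * ((1/u) ^ κ) ^ n := by rw [hxdef, mul_pow]
    have e2 : ((1/u) ^ κ : ℝ) ^ n = (1/u) ^ (κ * n) := by
      rw [← Real.rpow_natCast ((1/u) ^ κ) n, ← Real.rpow_mul h1u.le]
    have e3 : (1/u : ℝ) ≤ (1/u) ^ (κ * n) := by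
      have h := Real.rpow_le_rpow_of_exponent_le
        (x := 1/u) (by rw [le_div_iff₀ hu]; linarith) hκn
      rwa [Real.rpow_one] at h
    rw [e1, e2, one_div]
    rw [one_div] at e3
    nlinarith [pow_pos hδ n]
  -- conclude
  have hu' : u ^ (-1:ℝ) = u⁻¹ := Real.rpow_neg_one u
  rw [hu', show -δ * (1 / u) ^ κ = -x by rw [hxdef]; ring]
  have hfinal : Real.exp (-x) ≤ (n:ℝ)^n / δ^n * u := by
    calc Real.exp (-x) ≤ (n:ℝ)^n / x^n := hexp
      _ ≤ (n:ℝ)^n / (δ^n * u⁻¹) := by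
          apply div_le_div_of_nonneg_left (by positivity) (by positivity) hxlow
      _ = (n:ℝ)^n / δ^n * u := by
          field_simp
  calc u⁻¹ * Real.exp (-x) ≤ u⁻¹ * ((n:ℝ)^n / δ^n * u) := by
        apply mul_le_mul_of_nonneg_left hfinal (by positivity)
    _ = (n:ℝ)^n / δ^n := by field_simp

/-- For all `δ, γ, κ > 0`, the quantity
`sup_{t>0} ∫_0^∞ |s^(γ-1) - (s-t)^(γ-1) 1_{s>t}| s^(-γ) e^(-δ (t/s)^κ) ds` is finite. -/
theorem stmt0 (δ γ κ : ℝ) (hδ : 0 < δ) (hγ : 0 < γ) (hκ : 0 < κ) :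
    ∃ C : ℝ≥0∞, C < ⊤ ∧ ∀ t : ℝ, 0 < t →
      (∫⁻ s in Ioi (0 : ℝ), ENNReal.ofReal
        (|s ^ (γ - 1) - (if t < s then (s - t) ^ (γ - 1) else 0)| *
          s ^ (-γ) * Real.exp (-δ * (t / s) ^ κ))) ≤ C := by
  refine ⟨∫⁻ u in Ioi (0:ℝ), FF δ γ κ 1 u, ?_, fun t ht => ?_⟩
  swap
  · exact le_of_eq (FF_integral_scale δ γ κ ht)
  -- finiteness
  -- the real-valued integrand for t = 1
  set f : ℝ → ℝ := fun u =>
    |u ^ (γ - 1) - (if (1:ℝ) < u then (u - 1) ^ (γ - 1) else 0)| *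
      u ^ (-γ) * Real.exp (-δ * ((1:ℝ) / u) ^ κ) with hf
  have hFf : ∀ u : ℝ, FF δ γ κ 1 u = ENNReal.ofReal (f u) := fun u => rfl
  have hexp1 : ∀ u : ℝ, 0 < u → Real.exp (-δ * ((1:ℝ)/u) ^ κ) ≤ 1 := by
    intro u hu
    rw [Real.exp_le_one_iff]
    have : (0:ℝ) ≤ (1/u) ^ κ := Real.rpow_nonneg (by positivity) _
    nlinarith
  have hcover : Ioi (0:ℝ) = Ioc (0:ℝ) 1 ∪ Ioc 1 2 ∪ Ioi 2 := by
    rw [Ioc_union_Ioc_eq_Ioc (by norm_num) (by norm_num),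
      Ioc_union_Ioi_eq_Ioi (by norm_num)]
  -- Piece 1 : (0, 1]
  obtain ⟨Cδ, hCδ⟩ := piece_one hδ hκ
  have hA : (∫⁻ u in Ioc (0:ℝ) 1, FF δ γ κ 1 u) < ⊤ := by
    have hb : ∀ u ∈ Ioc (0:ℝ) 1, FF δ γ κ 1 u ≤ ENNReal.ofReal Cδ := by
      rintro u ⟨hu0, hu1⟩
      rw [hFf]
      apply ENNReal.ofReal_le_ofReal
      have hite : (if (1:ℝ) < u then (u - 1) ^ (γ - 1) else 0) = 0 :=
        if_neg (by linarith)
      have hval : f u = u ^ (-1:ℝ) * Real.exp (-δ * ((1:ℝ)/u) ^ κ) := by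
        rw [hf]
        simp only [hite, sub_zero]
        rw [abs_of_pos (Real.rpow_pos_of_pos hu0 _), ← Real.rpow_add hu0,
          show γ - 1 + -γ = (-1:ℝ) by ring]
      rw [hval]
      exact hCδ u hu0 hu1
    calc (∫⁻ u in Ioc (0:ℝ) 1, FF δ γ κ 1 u)
        ≤ ∫⁻ _ in Ioc (0:ℝ) 1, ENNReal.ofReal Cδ := setLIntegral_mono measurable_const hb
      _ = ENNReal.ofReal Cδ * volume (Ioc (0:ℝ) 1) := setLIntegral_const _ _
      _ < ⊤ := by
          apply ENNReal.mul_lt_top ENNReal.ofReal_lt_top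
          simp [Real.volume_Ioc]
  -- Piece 2 : (1, 2]
  have hB : (∫⁻ u in Ioc (1:ℝ) 2, FF δ γ κ 1 u) < ⊤ := by
    set K : ℝ := (2:ℝ) ^ (γ - 1) + 1 with hK
    have hint : IntegrableOn (fun u : ℝ => K + (u - 1) ^ (γ - 1)) (Ioc 1 2) volume := by
      have i1 : IntervalIntegrable (fun x : ℝ => x ^ (γ - 1)) volume 0 1 :=
        intervalIntegral.intervalIntegrable_rpow' (by linarith)
      have i2' : IntervalIntegrable (fun x : ℝ => (x - 1) ^ (γ - 1)) volume 1 2 := by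
        have i2 := i1.comp_sub_right 1
        norm_num at i2
        exact i2
      have i3 : IntegrableOn (fun x : ℝ => (x - 1) ^ (γ - 1)) (Ioc 1 2) volume :=
        (intervalIntegrable_iff_integrableOn_Ioc_of_le (by norm_num)).1 i2'
      exact (integrableOn_const (by simp [Real.volume_Ioc])).add i3
    have hb : ∀ u ∈ Ioc (1:ℝ) 2, FF δ γ κ 1 u
        ≤ ENNReal.ofReal (K + (u - 1) ^ (γ - 1)) := by
      rintro u ⟨hu1, hu2⟩
      rw [hFf]
      apply ENNReal.ofReal_le_ofReal
      have hu0 : (0:ℝ) < u := by linarith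
      have hum : (0:ℝ) < u - 1 := by linarith
      have hite : (if (1:ℝ) < u then (u - 1) ^ (γ - 1) else 0) = (u - 1) ^ (γ - 1) :=
        if_pos hu1
      have ha : (0:ℝ) ≤ u ^ (γ - 1) := Real.rpow_nonneg hu0.le _
      have hb' : (0:ℝ) ≤ (u - 1) ^ (γ - 1) := Real.rpow_nonneg hum.le _
      have habs : |u ^ (γ - 1) - (u - 1) ^ (γ - 1)| ≤ u ^ (γ - 1) + (u - 1) ^ (γ - 1) := by
        rw [abs_le]; constructor <;> nlinarith
      have huγ : u ^ (-γ) ≤ 1 :=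
        Real.rpow_le_one_of_one_le_of_nonpos hu1.le (by linarith)
      have huγ0 : (0:ℝ) ≤ u ^ (-γ) := Real.rpow_nonneg hu0.le _
      have hK' : u ^ (γ - 1) ≤ K := by
        rcases le_or_gt 0 (γ - 1) with h | h
        · have : u ^ (γ - 1) ≤ (2:ℝ) ^ (γ - 1) :=
            Real.rpow_le_rpow hu0.le hu2 h
          rw [hK]; linarith
        · have : u ^ (γ - 1) ≤ 1 :=
            Real.rpow_le_one_of_one_le_of_nonpos hu1.le h.le
          have h2 : (0:ℝ) < (2:ℝ) ^ (γ - 1) := Real.rpow_pos_of_pos (by norm_num) _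
          rw [hK]; linarith
      rw [hf]
      simp only [hite]
      calc |u ^ (γ - 1) - (u - 1) ^ (γ - 1)| * u ^ (-γ) * Real.exp (-δ * ((1:ℝ)/u) ^ κ)
          ≤ |u ^ (γ - 1) - (u - 1) ^ (γ - 1)| * u ^ (-γ) := by
            apply mul_le_of_le_one_right (by positivity) (hexp1 u hu0)
        _ ≤ |u ^ (γ - 1) - (u - 1) ^ (γ - 1)| := by
            apply mul_le_of_le_one_right (abs_nonneg _) huγ
        _ ≤ u ^ (γ - 1) + (u - 1) ^ (γ - 1) := habs
        _ ≤ K + (u - 1) ^ (γ - 1) := by linarith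
    calc (∫⁻ u in Ioc (1:ℝ) 2, FF δ γ κ 1 u)
        ≤ ∫⁻ u in Ioc (1:ℝ) 2, ENNReal.ofReal (K + (u - 1) ^ (γ - 1)) := by
          apply setLIntegral_mono (by fun_prop) hb
      _ < ⊤ := hint.setLIntegral_lt_top
  -- Piece 3 : (2, ∞)
  have hC : (∫⁻ u in Ioi (2:ℝ), FF δ γ κ 1 u) < ⊤ := by
    obtain ⟨M, r, hr, hbd⟩ :
        ∃ M r : ℝ, r < -1 ∧ ∀ u : ℝ, 2 ≤ u → f u ≤ M * u ^ r := by
      rcases lt_trichotomy γ 1 with hlt | heq | hgt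
      · -- 0 < γ < 1
        refine ⟨(2:ℝ) ^ (1 - γ), γ - 2, by linarith, fun u hu => ?_⟩
        have hu0 : (0:ℝ) < u := by linarith
        have hu1 : (1:ℝ) < u := by linarith
        have hum : (0:ℝ) < u - 1 := by linarith
        have hite : (if (1:ℝ) < u then (u - 1) ^ (γ - 1) else 0) = (u - 1) ^ (γ - 1) :=
          if_pos hu1
        have hmono : u ^ (γ - 1) ≤ (u - 1) ^ (γ - 1) :=
          Real.rpow_le_rpow_of_nonpos hum (by linarith) (by linarith)
        have habs : |u ^ (γ - 1) - (u - 1) ^ (γ - 1)| = (u - 1) ^ (γ - 1) - u ^ (γ - 1) := by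
          rw [abs_of_nonpos (by linarith), neg_sub]
        -- key cancellation
        have hq1 : u ^ (1 - γ) - (u - 1) ^ (1 - γ) ≤ 1 := by
          have := aux_rpow_sub_le (a := u) (b := u - 1) (p := 1 - γ)
            hum.le (by linarith) (by linarith) (by linarith)
          simpa using this
        have hA0 : (0:ℝ) < (u - 1) ^ (1 - γ) := Real.rpow_pos_of_pos hum _
        have hB0 : (0:ℝ) < u ^ (1 - γ) := Real.rpow_pos_of_pos hu0 _
        have hkey : (u - 1) ^ (γ - 1) - u ^ (γ - 1) ≤ (u - 1) ^ (γ - 1) * u ^ (γ - 1) := by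
          have e1 : (u - 1) ^ (γ - 1) = ((u - 1) ^ (1 - γ))⁻¹ := by
            rw [show γ - 1 = -(1 - γ) by ring, Real.rpow_neg hum.le]
          have e2 : u ^ (γ - 1) = (u ^ (1 - γ))⁻¹ := by
            rw [show γ - 1 = -(1 - γ) by ring, Real.rpow_neg hu0.le]
          rw [e1, e2, inv_sub_inv hA0.ne' hB0.ne', ← mul_inv, ← one_div]
          rw [div_le_div_iff₀ (by positivity) (by positivity)]
          nlinarith [mul_nonneg (by linarith : (0:ℝ) ≤ 1 - (u ^ (1 - γ) - (u - 1) ^ (1 - γ)))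
            (mul_pos hA0 hB0).le]
        have hmul : (u - 1) ^ (γ - 1) ≤ (2:ℝ) ^ (1 - γ) * u ^ (γ - 1) := by
          have h1 : (u - 1) ^ (γ - 1) ≤ (u / 2) ^ (γ - 1) :=
            Real.rpow_le_rpow_of_nonpos (by positivity) (by linarith) (by linarith)
          have h2 : (u / 2 : ℝ) ^ (γ - 1) = u ^ (γ - 1) / (2:ℝ) ^ (γ - 1) :=
            Real.div_rpow hu0.le (by norm_num) (γ - 1)
          have h3 : ((2:ℝ) ^ (γ - 1))⁻¹ = (2:ℝ) ^ (1 - γ) := by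
            rw [← Real.rpow_neg (by norm_num), show -(γ - 1) = 1 - γ by ring]
          calc (u - 1) ^ (γ - 1) ≤ u ^ (γ - 1) / (2:ℝ) ^ (γ - 1) := by rw [← h2]; exact h1
            _ = (2:ℝ) ^ (1 - γ) * u ^ (γ - 1) := by
                rw [div_eq_mul_inv, h3]; ring
        have hpow : u ^ (γ - 1) * u ^ (γ - 1) * u ^ (-γ) = u ^ (γ - 2) := by
          rw [← Real.rpow_add hu0, ← Real.rpow_add hu0,
            show γ - 1 + (γ - 1) + -γ = γ - 2 by ring]
        have huγ0 : (0:ℝ) ≤ u ^ (-γ) := Real.rpow_nonneg hu0.le _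
        have hup : (0:ℝ) ≤ u ^ (γ - 1) := Real.rpow_nonneg hu0.le _
        rw [hf]
        simp only [hite]
        calc |u ^ (γ - 1) - (u - 1) ^ (γ - 1)| * u ^ (-γ) * Real.exp (-δ * ((1:ℝ)/u) ^ κ)
            ≤ |u ^ (γ - 1) - (u - 1) ^ (γ - 1)| * u ^ (-γ) :=
              mul_le_of_le_one_right (by positivity) (hexp1 u hu0)
          _ = ((u - 1) ^ (γ - 1) - u ^ (γ - 1)) * u ^ (-γ) := by rw [habs]
          _ ≤ ((u - 1) ^ (γ - 1) * u ^ (γ - 1)) * u ^ (-γ) := by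
              apply mul_le_mul_of_nonneg_right hkey huγ0
          _ ≤ ((2:ℝ) ^ (1 - γ) * u ^ (γ - 1) * u ^ (γ - 1)) * u ^ (-γ) := by
              apply mul_le_mul_of_nonneg_right _ huγ0
              apply mul_le_mul_of_nonneg_right hmul hup
          _ = (2:ℝ) ^ (1 - γ) * (u ^ (γ - 1) * u ^ (γ - 1) * u ^ (-γ)) := by ring
          _ = (2:ℝ) ^ (1 - γ) * u ^ (γ - 2) := by rw [hpow]
      · -- γ = 1
        refine ⟨1, -2, by norm_num, fun u hu => ?_⟩
        have hu0 : (0:ℝ) < u := by linarith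
        have hu1 : (1:ℝ) < u := by linarith
        have hum : (0:ℝ) < u - 1 := by linarith
        have hval : f u = 0 := by
          rw [hf]
          simp only [heq]
          rw [if_pos hu1]
          norm_num [Real.rpow_zero]
        rw [hval]
        positivity
      · -- γ > 1
        rcases le_or_gt γ 2 with hle | hgt2
        · -- 1 < γ ≤ 2
          refine ⟨1, -γ, by linarith, fun u hu => ?_⟩
          have hu0 : (0:ℝ) < u := by linarith
          have hu1 : (1:ℝ) < u := by linarith
          have hum : (0:ℝ) < u - 1 := by linarith
          have hite : (if (1:ℝ) < u then (u - 1) ^ (γ - 1) else 0) = (u - 1) ^ (γ - 1) :=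
            if_pos hu1
          have hmono : (u - 1) ^ (γ - 1) ≤ u ^ (γ - 1) :=
            Real.rpow_le_rpow hum.le (by linarith) (by linarith)
          have habs : |u ^ (γ - 1) - (u - 1) ^ (γ - 1)| = u ^ (γ - 1) - (u - 1) ^ (γ - 1) :=
            abs_of_nonneg (by linarith)
          have hkey : u ^ (γ - 1) - (u - 1) ^ (γ - 1) ≤ 1 := by
            have := aux_rpow_sub_le (a := u) (b := u - 1) (p := γ - 1)
              hum.le (by linarith) (by linarith) (by linarith)
            simpa using this
          have huγ0 : (0:ℝ) ≤ u ^ (-γ) := Real.rpow_nonneg hu0.le _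
          rw [hf]
          simp only [hite]
          calc |u ^ (γ - 1) - (u - 1) ^ (γ - 1)| * u ^ (-γ) * Real.exp (-δ * ((1:ℝ)/u) ^ κ)
              ≤ |u ^ (γ - 1) - (u - 1) ^ (γ - 1)| * u ^ (-γ) :=
                mul_le_of_le_one_right (by positivity) (hexp1 u hu0)
            _ ≤ 1 * u ^ (-γ) := by
                apply mul_le_mul_of_nonneg_right _ huγ0
                rw [habs]; exact hkey
        · -- γ > 2
          refine ⟨γ - 1, -2, by norm_num, fun u hu => ?_⟩
          have hu0 : (0:ℝ) < u := by linarith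
          have hu1 : (1:ℝ) < u := by linarith
          have hum : (0:ℝ) < u - 1 := by linarith
          have hite : (if (1:ℝ) < u then (u - 1) ^ (γ - 1) else 0) = (u - 1) ^ (γ - 1) :=
            if_pos hu1
          have hmono : (u - 1) ^ (γ - 1) ≤ u ^ (γ - 1) :=
            Real.rpow_le_rpow hum.le (by linarith) (by linarith)
          have habs : |u ^ (γ - 1) - (u - 1) ^ (γ - 1)| = u ^ (γ - 1) - (u - 1) ^ (γ - 1) :=
            abs_of_nonneg (by linarith)
          -- Bernoulli
          have hbern := one_add_mul_self_le_rpow_one_add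
            (s := -(1/u)) (by
              have : (1:ℝ)/u ≤ 1 := by rw [div_le_one hu0]; linarith
              linarith) (p := γ - 1) (by linarith)
          -- hbern : 1 + (γ-1) * -(1/u) ≤ (1 + -(1/u)) ^ (γ-1)
          have hfac : (u - 1 : ℝ) = u * (1 + -(1/u)) := by
            have hne := hu0.ne'
            field_simp
            ring
          have h1u : (0:ℝ) ≤ 1 + -(1/u) := by
            have : (1:ℝ)/u ≤ 1 := by rw [div_le_one hu0]; linarith
            linarith
          have hsplit : (u - 1) ^ (γ - 1) = u ^ (γ - 1) * (1 + -(1/u)) ^ (γ - 1) := by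
            rw [hfac, Real.mul_rpow hu0.le h1u]
          have hup : (0:ℝ) < u ^ (γ - 1) := Real.rpow_pos_of_pos hu0 _
          have hkey : u ^ (γ - 1) - (u - 1) ^ (γ - 1) ≤ (γ - 1) * u ^ (γ - 1) * (1/u) := by
            rw [hsplit]
            have := mul_le_mul_of_nonneg_left hbern hup.le
            nlinarith
          have hpow : u ^ (γ - 1) * (1/u) * u ^ (-γ) = u ^ (-2 : ℝ) := by
            rw [one_div, ← Real.rpow_neg_one u, ← Real.rpow_add hu0, ← Real.rpow_add hu0,
              show γ - 1 + -1 + -γ = (-2:ℝ) by ring]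
          have huγ0 : (0:ℝ) ≤ u ^ (-γ) := Real.rpow_nonneg hu0.le _
          rw [hf]
          simp only [hite]
          calc |u ^ (γ - 1) - (u - 1) ^ (γ - 1)| * u ^ (-γ) * Real.exp (-δ * ((1:ℝ)/u) ^ κ)
              ≤ |u ^ (γ - 1) - (u - 1) ^ (γ - 1)| * u ^ (-γ) :=
                mul_le_of_le_one_right (by positivity) (hexp1 u hu0)
            _ ≤ ((γ - 1) * u ^ (γ - 1) * (1/u)) * u ^ (-γ) := by
                apply mul_le_mul_of_nonneg_right _ huγ0
                rw [habs]; exact hkey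
            _ = (γ - 1) * (u ^ (γ - 1) * (1/u) * u ^ (-γ)) := by ring
            _ = (γ - 1) * u ^ (-2 : ℝ) := by rw [hpow]
    have hint : IntegrableOn (fun u : ℝ => M * u ^ r) (Ioi 2) volume :=
      (integrableOn_Ioi_rpow_of_lt hr (by norm_num)).const_mul M
    have hb : ∀ u ∈ Ioi (2:ℝ), FF δ γ κ 1 u ≤ ENNReal.ofReal (M * u ^ r) := by
      intro u hu
      rw [hFf]
      exact ENNReal.ofReal_le_ofReal (hbd u (le_of_lt hu))
    calc (∫⁻ u in Ioi (2:ℝ), FF δ γ κ 1 u)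
        ≤ ∫⁻ u in Ioi (2:ℝ), ENNReal.ofReal (M * u ^ r) := by
          apply setLIntegral_mono (by fun_prop) hb
      _ < ⊤ := hint.setLIntegral_lt_top
  -- combine
  rw [hcover]
  calc (∫⁻ u in Ioc (0:ℝ) 1 ∪ Ioc 1 2 ∪ Ioi 2, FF δ γ κ 1 u)
      ≤ (∫⁻ u in Ioc (0:ℝ) 1 ∪ Ioc 1 2, FF δ γ κ 1 u) + ∫⁻ u in Ioi (2:ℝ), FF δ γ κ 1 u :=
        lintegral_union_le _ _ _
    _ ≤ ((∫⁻ u in Ioc (0:ℝ) 1, FF δ γ κ 1 u) + ∫⁻ u in Ioc (1:ℝ) 2, FF δ γ κ 1 u)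
        + ∫⁻ u in Ioi (2:ℝ), FF δ γ κ 1 u := by
        exact add_le_add_left (lintegral_union_le _ _ _) _
    _ < ⊤ := by
        apply ENNReal.add_lt_top.2
        exact ⟨ENNReal.add_lt_top.2 ⟨hA, hB⟩, hC⟩
end

section
/- For every γ > 0, the integral ∫_1^∞ |(1+u)^{γ−1} − u^{γ−1}| (1+u)^{−γ} du is bounded above by |γ−1|·ln 2. -/
open MeasureTheory Set

lemma point_bound (γ : ℝ) (hγ : 0 < γ) (u : ℝ) (hu : 1 < u) :
    |(1 + u) ^ (γ - 1) - u ^ (γ - 1)| * (1 + u) ^ (-γ)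
      ≤ |γ - 1| * (1 / u - 1 / (u + 1)) := by
  have hu0 : 0 < u := lt_trans one_pos hu
  have hu1 : (0:ℝ) < u + 1 := by linarith
  rw [add_comm 1 u]
  rcases eq_or_ne γ 1 with h1 | h1
  · subst h1
    simp only [sub_self, Real.rpow_zero, abs_zero, zero_mul]
    positivity
  · have hne : γ - 2 ≠ -1 := fun h => h1 (by linarith)
    have h0 : (0:ℝ) ∉ Set.uIcc u (u + 1) := by
      rw [Set.uIcc_of_le (by linarith)]
      intro h
      rcases h with ⟨h, _⟩; linarith
    have key : ∫ t in u..(u + 1), t ^ (γ - 2) = ((u + 1) ^ (γ - 1) - u ^ (γ - 1)) / (γ - 1) := by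
      rw [integral_rpow (Or.inr ⟨hne, h0⟩), show γ - 2 + 1 = γ - 1 from by ring]
    have hγ1 : γ - 1 ≠ 0 := sub_ne_zero.mpr h1
    have hdiff : (u + 1) ^ (γ - 1) - u ^ (γ - 1) = (γ - 1) * ∫ t in u..(u + 1), t ^ (γ - 2) := by
      rw [key]; field_simp
    have hI : 0 ≤ ∫ t in u..(u + 1), t ^ (γ - 2) := by
      apply intervalIntegral.integral_nonneg (by linarith)
      intro t ht
      exact Real.rpow_nonneg (le_trans hu0.le ht.1) _
    have hint1 : IntervalIntegrable (fun t => t ^ (γ - 2) * (u + 1) ^ (-γ)) volume u (u + 1) :=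
      (intervalIntegral.intervalIntegrable_rpow (Or.inr h0)).mul_const _
    have hint2 : IntervalIntegrable (fun t : ℝ => t ^ (-2 : ℝ)) volume u (u + 1) :=
      intervalIntegral.intervalIntegrable_rpow (Or.inr h0)
    have hle : ∫ t in u..(u + 1), t ^ (γ - 2) * (u + 1) ^ (-γ)
        ≤ ∫ t in u..(u + 1), t ^ (-2 : ℝ) := by
      apply intervalIntegral.integral_mono_on (by linarith) hint1 hint2
      intro t ht
      have ht0 : 0 < t := lt_of_lt_of_le hu0 ht.1
      have h2 : (u + 1) ^ (-γ) ≤ t ^ (-γ) :=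
        Real.rpow_le_rpow_of_nonpos ht0 ht.2 (by linarith)
      calc t ^ (γ - 2) * (u + 1) ^ (-γ) ≤ t ^ (γ - 2) * t ^ (-γ) :=
            mul_le_mul_of_nonneg_left h2 (Real.rpow_nonneg ht0.le _)
        _ = t ^ (-2 : ℝ) := by
            rw [← Real.rpow_add ht0]
            congr 1; ring
    have hval : ∫ t in u..(u + 1), t ^ (-2 : ℝ) = 1 / u - 1 / (u + 1) := by
      rw [integral_rpow (Or.inr ⟨by norm_num, h0⟩)]
      norm_num
      rw [Real.rpow_neg_one, Real.rpow_neg_one]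
      field_simp
      ring
    calc |(u + 1) ^ (γ - 1) - u ^ (γ - 1)| * (u + 1) ^ (-γ)
        = |γ - 1| * ((∫ t in u..(u + 1), t ^ (γ - 2)) * (u + 1) ^ (-γ)) := by
          rw [hdiff, abs_mul, abs_of_nonneg hI, mul_assoc]
      _ = |γ - 1| * ∫ t in u..(u + 1), t ^ (γ - 2) * (u + 1) ^ (-γ) := by
          rw [intervalIntegral.integral_mul_const]
      _ ≤ |γ - 1| * (1 / u - 1 / (u + 1)) := by
          rw [← hval]
          exact mul_le_mul_of_nonneg_left hle (abs_nonneg _)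

lemma integral_value : ∫ u in Ioi (1:ℝ), (1 / u - 1 / (u + 1)) = Real.log 2 := by
  have hderiv : ∀ x ∈ Ici (1:ℝ), HasDerivAt (fun u => Real.log u - Real.log (u + 1))
      (1 / x - 1 / (x + 1)) x := by
    intro x hx
    have hx0 : (0:ℝ) < x := lt_of_lt_of_le one_pos hx
    have h1 : HasDerivAt Real.log (1 / x) x := by
      simpa [one_div] using Real.hasDerivAt_log hx0.ne'
    have h2 : HasDerivAt (fun u : ℝ => Real.log (u + 1)) (1 / (x + 1)) x := by
      have := (Real.hasDerivAt_log (by linarith : x + 1 ≠ 0)).comp x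
        ((hasDerivAt_id x).add_const 1)
      simpa [one_div, Function.comp_def] using this
    exact h1.sub h2
  have hint : IntegrableOn (fun u : ℝ => 1 / u - 1 / (u + 1)) (Ioi 1) := by
    have hb : IntegrableOn (fun u : ℝ => u ^ (-2 : ℝ)) (Ioi 1) :=
      integrableOn_Ioi_rpow_of_lt (by norm_num) one_pos
    apply hb.mono' ?_ ?_
    · exact (Measurable.sub ((measurable_const.div measurable_id))
        (measurable_const.div (measurable_id.add_const 1))).aestronglyMeasurable
    · filter_upwards [ae_restrict_mem measurableSet_Ioi] with x hx
      have hx0 : (0:ℝ) < x := lt_trans one_pos hx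
      have h1 : (0:ℝ) ≤ 1 / x - 1 / (x + 1) := by
        rw [sub_nonneg]
        apply one_div_le_one_div_of_le hx0 (by linarith)
      rw [Real.norm_eq_abs, abs_of_nonneg h1, Real.rpow_neg hx0.le, Real.rpow_two]
      rw [div_sub_div _ _ hx0.ne' (by linarith : x + 1 ≠ 0), inv_eq_one_div]
      rw [div_le_div_iff₀ (by positivity) (by positivity)]
      nlinarith
  have htend : Filter.Tendsto (fun u => Real.log u - Real.log (u + 1)) Filter.atTop (nhds 0) := by
    have : (fun u : ℝ => Real.log u - Real.log (u + 1)) =ᶠ[Filter.atTop]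
        fun u => -Real.log (1 + u⁻¹) := by
      filter_upwards [Filter.eventually_gt_atTop 0] with u hu
      rw [← Real.log_div hu.ne' (by linarith), ← Real.log_inv]
      congr 1
      field_simp
    rw [Filter.tendsto_congr' this]
    have h1 : Filter.Tendsto (fun u : ℝ => 1 + u⁻¹) Filter.atTop (nhds 1) := by
      simpa using Filter.Tendsto.const_add (1:ℝ) tendsto_inv_atTop_zero
    have := (Real.continuousAt_log one_ne_zero).tendsto.comp h1
    simpa using this.neg
  have := MeasureTheory.integral_Ioi_of_hasDerivAt_of_tendsto' hderiv hint htend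
  rw [this]
  norm_num

/-- For every `γ > 0`,
`∫_1^∞ |(1+u)^(γ-1) - u^(γ-1)| (1+u)^(-γ) du ≤ |γ-1| * log 2`. -/
theorem stmt2 (γ : ℝ) (hγ : 0 < γ) :
    (∫⁻ u in Ioi (1 : ℝ),
        ENNReal.ofReal (|(1 + u) ^ (γ - 1) - u ^ (γ - 1)| * (1 + u) ^ (-γ))) ≤
      ENNReal.ofReal (|γ - 1| * Real.log 2) := by
  have hint : IntegrableOn (fun u : ℝ => 1 / u - 1 / (u + 1)) (Ioi 1) := by
    have hb : IntegrableOn (fun u : ℝ => u ^ (-2 : ℝ)) (Ioi 1) :=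
      integrableOn_Ioi_rpow_of_lt (by norm_num) one_pos
    apply hb.mono' ?_ ?_
    · exact (Measurable.sub ((measurable_const.div measurable_id))
        (measurable_const.div (measurable_id.add_const 1))).aestronglyMeasurable
    · filter_upwards [ae_restrict_mem measurableSet_Ioi] with x hx
      have hx0 : (0:ℝ) < x := lt_trans one_pos hx
      have h1 : (0:ℝ) ≤ 1 / x - 1 / (x + 1) := by
        rw [sub_nonneg]
        apply one_div_le_one_div_of_le hx0 (by linarith)
      rw [Real.norm_eq_abs, abs_of_nonneg h1, Real.rpow_neg hx0.le, Real.rpow_two]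
      rw [div_sub_div _ _ hx0.ne' (by linarith : x + 1 ≠ 0), inv_eq_one_div]
      rw [div_le_div_iff₀ (by positivity) (by positivity)]
      nlinarith
  calc (∫⁻ u in Ioi (1 : ℝ),
        ENNReal.ofReal (|(1 + u) ^ (γ - 1) - u ^ (γ - 1)| * (1 + u) ^ (-γ)))
      ≤ ∫⁻ u in Ioi (1 : ℝ), ENNReal.ofReal (|γ - 1| * (1 / u - 1 / (u + 1))) := by
        apply setLIntegral_mono
        · exact (measurable_const.mul ((measurable_const.div measurable_id).sub
            (measurable_const.div (measurable_id.add_const 1)))).ennreal_ofReal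
        · intro u hu
          exact ENNReal.ofReal_le_ofReal (point_bound γ hγ u hu)
    _ = ENNReal.ofReal (∫ u in Ioi (1:ℝ), |γ - 1| * (1 / u - 1 / (u + 1))) := by
        rw [MeasureTheory.ofReal_integral_eq_lintegral_ofReal (hint.const_mul _)]
        filter_upwards [ae_restrict_mem measurableSet_Ioi] with x hx
        have hx0 : (0:ℝ) < x := lt_trans one_pos hx
        have h1 : (0:ℝ) ≤ 1 / x - 1 / (x + 1) := by
          rw [sub_nonneg]
          apply one_div_le_one_div_of_le hx0 (by linarith)
        positivity
    _ = ENNReal.ofReal (|γ - 1| * Real.log 2) := by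
        rw [MeasureTheory.integral_const_mul, integral_value]
end
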